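/- Let n ≥ 3 and k ≥ 1 be integers. Then the independence number of the perfect semiregular tree T_{n,k}, i.e. the maximum cardinality of an independent set of vertices of T_{n,k}, equals ((n−1)^{k+1} − 1)/(n − 2). -/

import Mathlib

/-!
Every non-leaf vertex can be sent injectively to a child (its first one), so mapping the levels
of parity different from `k` one level down turns any independent set injectively into a subset
of the levels with the parity of `k`; those levels form an independent set themselves, hence a
maximum one. Since level `a + 1` has `n (n-1)^a = (n-1)^(a+1) + (n-1)^a` vertices, the
levels `k, k-2, …` have `1 + (n-1) + ⋯ + (n-1)^k` vertices in total.
-/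

open MvPolynomial

/-- Level sizes of the perfect semiregular tree `T_{n,k}`. -/
def semiLevel (n : ℕ) : ℕ → ℕ
  | 0 => 1
  | a + 1 => n * (n - 1) ^ a

/-- Vertices of the perfect semiregular tree `T_{n,k}`. -/
abbrev SemiVert (n k : ℕ) : Type := Σ a : Fin (k + 1), Fin (semiLevel n (a : ℕ))

/-- The perfect semiregular tree `T_{n,k}`: every internal (non-pendant) vertex has degree
`n` and every pendant vertex is at distance `k` from the root.  The vertex `j` at level
`a+1` is a child of vertex `j/(n-1)` at level `a` (of the root when `a = 0`). -/
def semiTree (n k : ℕ) : SimpleGraph (SemiVert n k) :=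
  SimpleGraph.fromRel (fun v w =>
    (v.1 : ℕ) + 1 = (w.1 : ℕ) ∧ ((v.1 : ℕ) = 0 ∨ (v.2 : ℕ) = (w.2 : ℕ) / (n - 1)))

/-- A set of vertices is independent if it contains no pair of adjacent vertices. -/
def IsIndepSet {V : Type} (G : SimpleGraph V) (W : Set V) : Prop :=
  ∀ v ∈ W, ∀ w ∈ W, ¬ G.Adj v w

/-- The independence number of a graph: the maximum size of an independent set. -/
noncomputable def indepNum {V : Type} (G : SimpleGraph V) : ℕ :=
  sSup {d | ∃ W : Finset V, IsIndepSet G (W : Set V) ∧ W.card = d}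

open Finset

section IndependentSets

variable {V : Type} {G : SimpleGraph V}

lemma indepNum_eq_card {S : Finset V} (hS : IsIndepSet G S)
    (hmax : ∀ W : Finset V, IsIndepSet G W → #W ≤ #S) : indepNum G = #S :=
  IsGreatest.csSup_eq ⟨⟨S, hS, rfl⟩, by rintro _ ⟨W, hW, rfl⟩; exact hmax W hW⟩

/-- Vertices of `W` outside `S` are moved along `f`; independence keeps them off the vertices
of `W` already in `S`. -/
lemma IsIndepSet.card_le_of_injOn_adj {W : Finset V} (hW : IsIndepSet G W) (S : Finset V)
    (f : V → V) (hf_mem : ∀ v ∉ S, f v ∈ S) (hf_adj : ∀ v ∉ S, G.Adj v (f v))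
    (hf_inj : Set.InjOn f (↑S)ᶜ) : #W ≤ #S := by
  classical
  refine card_le_card_of_injOn (fun v => if v ∈ S then v else f v) ?_ ?_
  · intro v _
    by_cases hv : v ∈ S <;> simp [hv, hf_mem]
  · intro v hv w hw hvw
    by_cases hvS : v ∈ S <;> by_cases hwS : w ∈ S <;> simp only [hvS, hwS, if_true, if_false] at hvw
    · exact hvw
    · exact absurd (hvw ▸ hf_adj w hwS) (hW w hw v hv)
    · exact absurd (hvw ▸ hf_adj v hvS) (hW v hv w hw)
    · exact hf_inj hvS hwS hvw

end IndependentSets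

section SemiTree

variable {n k : ℕ}

lemma SemiVert.ext_val {v w : SemiVert n k} (h₁ : (v.1 : ℕ) = w.1) (h₂ : (v.2 : ℕ) = w.2) :
    v = w :=
  Sigma.ext (Fin.ext h₁) ((Fin.heq_ext_iff (by rw [Fin.ext h₁])).mpr h₂)

lemma semiTree_adj_level {v w : SemiVert n k} (h : (semiTree n k).Adj v w) :
    (v.1 : ℕ) + 1 = w.1 ∨ (w.1 : ℕ) + 1 = v.1 := by
  rw [semiTree, SimpleGraph.fromRel_adj] at h
  exact h.2.imp And.left And.left

lemma semiLevel_succ (hn : 1 ≤ n) (a : ℕ) :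
    semiLevel n (a + 1) = (n - 1) ^ (a + 1) + (n - 1) ^ a := by
  obtain ⟨m, rfl⟩ : ∃ m, n = m + 1 := ⟨n - 1, by omega⟩
  simp only [semiLevel, Nat.add_sub_cancel, pow_succ]
  ring

lemma mul_lt_semiLevel_succ (hn : 2 ≤ n) (a : ℕ) {j : ℕ} (hj : j < semiLevel n a) :
    j * (n - 1) < semiLevel n (a + 1) := by
  calc j * (n - 1) < semiLevel n a * (n - 1) := Nat.mul_lt_mul_of_pos_right hj (by omega)
    _ ≤ semiLevel n (a + 1) := by cases a <;> simp [semiLevel, pow_succ, mul_assoc]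

def firstChild (hn : 2 ≤ n) (v : SemiVert n k) : SemiVert n k :=
  if h : (v.1 : ℕ) < k then
    ⟨⟨v.1 + 1, by omega⟩, ⟨v.2 * (n - 1), mul_lt_semiLevel_succ hn _ v.2.isLt⟩⟩
  else v

lemma firstChild_of_lt (hn : 2 ≤ n) {v : SemiVert n k} (h : (v.1 : ℕ) < k) :
    firstChild hn v =
      ⟨⟨v.1 + 1, by omega⟩, ⟨v.2 * (n - 1), mul_lt_semiLevel_succ hn _ v.2.isLt⟩⟩ :=
  dif_pos h

lemma semiTree_adj_firstChild (hn : 2 ≤ n) {v : SemiVert n k} (h : (v.1 : ℕ) < k) :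
    (semiTree n k).Adj v (firstChild hn v) := by
  rw [firstChild_of_lt hn h, semiTree, SimpleGraph.fromRel_adj]
  refine ⟨fun he => by simpa using congrArg (fun x : SemiVert n k => (x.1 : ℕ)) he, Or.inl ?_⟩
  refine ⟨rfl, ?_⟩
  rcases Nat.eq_zero_or_pos (v.1 : ℕ) with h0 | h0
  · exact Or.inl h0
  · exact Or.inr (Nat.mul_div_cancel _ (by omega)).symm

lemma firstChild_injOn (hn : 2 ≤ n) :
    Set.InjOn (firstChild (k := k) hn) {v | (v.1 : ℕ) < k} := by
  intro v hv w hw hvw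
  rw [firstChild_of_lt hn hv, firstChild_of_lt hn hw] at hvw
  have hlevel := congrArg (fun x : SemiVert n k => (x.1 : ℕ)) hvw
  have hidx := congrArg (fun x : SemiVert n k => (x.2 : ℕ)) hvw
  simp only at hlevel hidx
  exact SemiVert.ext_val (by omega) (Nat.eq_of_mul_eq_mul_right (by omega : 0 < n - 1) hidx)

def leafParityLevels (n k : ℕ) : Finset (SemiVert n k) :=
  (univ.filter fun a : Fin (k + 1) => (a : ℕ) % 2 = k % 2).sigma fun _ => univ

lemma mem_leafParityLevels {v : SemiVert n k} :
    v ∈ leafParityLevels n k ↔ (v.1 : ℕ) % 2 = k % 2 := by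
  simp [leafParityLevels]

lemma isIndepSet_leafParityLevels : IsIndepSet (semiTree n k) (leafParityLevels n k) := by
  intro v hv w hw hadj
  rw [mem_coe, mem_leafParityLevels] at hv hw
  rcases semiTree_adj_level hadj with h | h <;> omega

lemma card_le_card_leafParityLevels (hn : 2 ≤ n) {W : Finset (SemiVert n k)}
    (hW : IsIndepSet (semiTree n k) W) : #W ≤ #(leafParityLevels n k) := by
  have hlt : ∀ v ∉ leafParityLevels n k, (v.1 : ℕ) < k := fun v hv => by
    rw [mem_leafParityLevels] at hv
    have := v.1.isLt
    omega
  refine hW.card_le_of_injOn_adj _ (firstChild hn) (fun v hv => ?_)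
    (fun v hv => semiTree_adj_firstChild hn (hlt v hv))
    ((firstChild_injOn hn).mono fun v hv => hlt v hv)
  rw [firstChild_of_lt hn (hlt v hv), mem_leafParityLevels]
  rw [mem_leafParityLevels] at hv
  dsimp only
  omega

lemma card_leafParityLevels :
    #(leafParityLevels n k) = ∑ a ∈ (range (k + 1)).filter (· % 2 = k % 2), semiLevel n a := by
  rw [leafParityLevels, card_sigma, sum_filter, sum_filter]
  simp only [card_univ, Fintype.card_fin]
  exact Fin.sum_univ_eq_sum_range (fun a => if a % 2 = k % 2 then semiLevel n a else 0) (k + 1)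

lemma sum_semiLevel_filter_parity (hn : 1 ≤ n) (k : ℕ) :
    ∑ a ∈ (range (k + 1)).filter (· % 2 = k % 2), semiLevel n a =
      ∑ j ∈ range (k + 1), (n - 1) ^ j := by
  induction k using Nat.twoStepInduction with
  | zero => rfl
  | one =>
    rw [show (range 2).filter (· % 2 = 1 % 2) = {1} by decide, sum_singleton,
      semiLevel_succ hn, sum_range_succ, sum_range_one]
    ring
  | more k ih _ =>
    have hsplit : (range (k + 2 + 1)).filter (· % 2 = (k + 2) % 2) =
        insert (k + 2) ((range (k + 1)).filter (· % 2 = k % 2)) := by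
      ext a
      simp only [mem_filter, mem_range, mem_insert]
      omega
    rw [hsplit, sum_insert (by simp), ih, semiLevel_succ hn, sum_range_succ _ (k + 2),
      sum_range_succ _ (k + 1)]
    ring

end SemiTree

theorem indepNum_semiTree_general (n k : ℕ) (hn : 3 ≤ n) :
    (indepNum (semiTree n k) : ℚ) = (((n : ℚ) - 1) ^ (k + 1) - 1) / ((n : ℚ) - 2) := by
  have hindep : indepNum (semiTree n k) = #(leafParityLevels n k) :=
    indepNum_eq_card isIndepSet_leafParityLevels fun _ hW =>
      card_le_card_leafParityLevels (by omega) hW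
  have hratio : ((n : ℚ) - 1) ≠ 1 := by
    have : (3 : ℚ) ≤ n := by exact_mod_cast hn
    linarith
  rw [hindep, card_leafParityLevels, sum_semiLevel_filter_parity (by omega), Nat.cast_sum]
  push_cast [Nat.cast_sub (by omega : 1 ≤ n)]
  rw [geom_sum_eq hratio]
  ring

theorem indepNum_semiTree (n k : ℕ) (hn : 3 ≤ n) (hk : 1 ≤ k) :
    (indepNum (semiTree n k) : ℚ) = (((n : ℚ) - 1) ^ (k + 1) - 1) / ((n : ℚ) - 2) :=
  indepNum_semiTree_general n k hn
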